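/- arXiv:2012.11718 — 3 statements merged into one kernel-verified Lean document; each statement's English description precedes it below -/
import Mathlib

section
/- Let S be a finitely generated commutative domain containing ℤ (equivalently, a finitely generated ℤ-algebra that is an integral domain of characteristic zero). Then there are infinitely many primes p for which there exists a ring homomorphism φₚ : S → 𝔽ₚ to the prime field with p elements; that is, for every natural number N there exist a prime p > N and a ring homomorphism S → ℤ/pℤ. -/
/-!
Tensoring with `ℚ` and passing to the residue field of a maximal ideal gives, by Zariski's
lemma, a ring map `φ : S → L` into a finite extension `L` of `ℚ`. Write `L = ℚ(θ)` with `θ` an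
algebraic integer; clearing denominators, `M • φ x ∈ ℤ[θ]` for one nonzero integer `M` and all
generators `x` of `S`, so `φ` lands in `ℤ[θ][1/M]`. By Schur's theorem the minimal polynomial `f`
of `θ` has a root `a` modulo infinitely many primes `p`, and for `p ∤ M` the map
`ℤ[θ] ≅ ℤ[X]/(f) → 𝔽ₚ`, `θ ↦ a`, extends to `ℤ[θ][1/M]`, hence to `S`.
-/

open Polynomial

universe u

theorem Int.exists_prime_gt_dvd_of_factorial_dvd_sub_one {w : ℤ} (hw : 1 < w.natAbs) (N : ℕ)
    (hN : (N.factorial : ℤ) ∣ w - 1) : ∃ p, N < p ∧ p.Prime ∧ (p : ℤ) ∣ w := by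
  have hp : w.natAbs.minFac.Prime := Nat.minFac_prime hw.ne'
  have hpw : (w.natAbs.minFac : ℤ) ∣ w := Int.ofNat_dvd_left.mpr w.natAbs.minFac_dvd
  refine ⟨_, not_le.mp fun hle ↦ hp.not_dvd_one ?_, hp, hpw⟩
  have hpN : (w.natAbs.minFac : ℤ) ∣ N.factorial :=
    Int.natCast_dvd_natCast.mpr (Nat.dvd_factorial hp.pos hle)
  have : (w.natAbs.minFac : ℤ) ∣ 1 := by simpa using dvd_sub hpw (hpN.trans hN)
  exact_mod_cast this

/-- Schur: with `c = f 0 ≠ 0` one has `f (c * N! * k) = c * w` where `w ≡ 1 [ZMOD N!]`, and for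
all but finitely many `k` the factor `w` is not `0` or `±1`, so it has a prime factor `p > N`. -/
theorem Polynomial.exists_prime_gt_dvd_eval (f : ℤ[X]) (hf : 0 < f.natDegree) (N : ℕ) :
    ∃ p, N < p ∧ p.Prime ∧ ∃ a : ℤ, (p : ℤ) ∣ f.eval a := by
  by_cases hc : f.coeff 0 = 0
  · obtain ⟨p, hNp, hp⟩ := Nat.exists_infinite_primes (N + 1)
    exact ⟨p, hNp, hp, 0, by simp [← coeff_zero_eq_eval_zero, hc]⟩
  set c := f.coeff 0
  set d : ℤ := c * N.factorial
  have hd : d ≠ 0 := mul_ne_zero hc (by positivity)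
  set P := f * (f - C c) * (f + C c)
  have hP : P ≠ 0 := mul_ne_zero (mul_ne_zero (ne_zero_of_natDegree_gt hf)
    (ne_zero_of_natDegree_gt (by rwa [natDegree_sub_C])))
    (ne_zero_of_natDegree_gt (by rwa [natDegree_add_C]))
  obtain ⟨k, hk⟩ : ∃ k : ℤ, P.eval (d * k) ≠ 0 := by
    by_contra! h
    refine hP (eq_zero_of_infinite_isRoot P ((Set.infinite_range_of_injective
      (mul_right_injective₀ hd)).mono ?_))
    rintro _ ⟨k, rfl⟩
    exact h k
  obtain ⟨h, hh⟩ := sub_dvd_eval_sub (d * k) 0 f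
  set w := 1 + N.factorial * (k * h)
  have hfw : f.eval (d * k) = c * w := by
    rw [← coeff_zero_eq_eval_zero] at hh
    linear_combination hh
  have hw : 1 < w.natAbs := by
    simp only [P, eval_mul, eval_sub, eval_add, eval_C, hfw] at hk
    have : w ≠ 0 ∧ w ≠ 1 ∧ w ≠ -1 := by
      refine ⟨?_, ?_, ?_⟩ <;> rintro hw <;> apply hk <;> rw [hw] <;> ring
    omega
  obtain ⟨p, hNp, hp, hpw⟩ :=
    Int.exists_prime_gt_dvd_of_factorial_dvd_sub_one hw N ⟨k * h, by ring⟩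
  exact ⟨p, hNp, hp, d * k, hfw ▸ hpw.mul_left c⟩

section ClearDenominators

variable (R K : Type*) {L : Type*} [CommRing R] [IsDomain R] [Field K] [Algebra R K]
  [IsFractionRing R K] [Field L] [Algebra K L] [Algebra R L] [IsScalarTower R K L]

theorem exists_isIntegral_adjoin_eq_top [FiniteDimensional K L] [Algebra.IsSeparable K L] :
    ∃ θ : L, IsIntegral R θ ∧ Algebra.adjoin K {θ} = ⊤ := by
  obtain ⟨α, hα⟩ := Field.exists_primitive_element K L
  obtain ⟨c, hc, hcα⟩ := ((IsFractionRing.isAlgebraic_iff R K L).mpr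
    (Algebra.IsAlgebraic.isAlgebraic α)).exists_integral_multiple
  refine ⟨c • α, hcα, Algebra.adjoin_eq_top_of_primitive_element
    (Algebra.IsAlgebraic.isAlgebraic _) (eq_top_iff.mpr (hα ▸ ?_))⟩
  rw [IntermediateField.adjoin_simple_le_iff, ← algebraMap_smul K]
  have hc' : algebraMap R K c ≠ 0 := IsFractionRing.to_map_ne_zero_of_mem_nonZeroDivisors
    (mem_nonZeroDivisors_of_ne_zero hc)
  have := IntermediateField.smul_mem _ (IntermediateField.mem_adjoin_simple_self K
    (algebraMap R K c • α)) (x := (algebraMap R K c)⁻¹)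
  rwa [smul_smul, inv_mul_cancel₀ hc', one_smul] at this

theorem exists_smul_mem_adjoin_of_mem_adjoin {θ y : L} (hy : y ∈ Algebra.adjoin K {θ}) :
    ∃ b : R, b ≠ 0 ∧ b • y ∈ Algebra.adjoin R {θ} := by
  rw [Algebra.adjoin_singleton_eq_range_aeval] at hy
  obtain ⟨g, rfl⟩ := hy
  obtain ⟨b, hb, hg⟩ := IsLocalization.integerNormalization_spec (nonZeroDivisors R) g
  refine ⟨b, nonZeroDivisors.ne_zero hb, ?_⟩
  have : aeval θ (IsLocalization.integerNormalization (nonZeroDivisors R) g) =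
      b • aeval θ g := by
    rw [← aeval_map_algebraMap K, hg, ← algebraMap_smul K b g, map_smul, algebraMap_smul]
  exact this ▸ aeval_mem_adjoin_singleton R θ

theorem exists_smul_mem_adjoin_of_adjoin_eq_top {θ : L} (hθ : Algebra.adjoin K {θ} = ⊤)
    (s : Finset L) : ∃ b : R, b ≠ 0 ∧ ∀ y ∈ s, b • y ∈ Algebra.adjoin R {θ} := by
  choose b hb hby using fun y ↦
    exists_smul_mem_adjoin_of_mem_adjoin R K (hθ ▸ Algebra.mem_top (x := y))
  refine ⟨∏ y ∈ s, b y, Finset.prod_ne_zero_iff.mpr fun y _ ↦ hb y, fun y hy ↦ ?_⟩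
  classical
  rw [← Finset.prod_erase_mul _ _ hy, mul_smul]
  exact Subalgebra.smul_mem _ (hby y) _

end ClearDenominators

theorem Algebra.FiniteType.exists_algHom_finiteDimensional (k : Type*) (A : Type u) [Field k]
    [CommRing A] [Nontrivial A] [Algebra k A] [Algebra.FiniteType k A] :
    ∃ (L : Type u) (_ : Field L) (_ : Algebra k L),
      FiniteDimensional k L ∧ Nonempty (A →ₐ[k] L) := by
  obtain ⟨m, hm⟩ := Ideal.exists_maximal A
  let := Ideal.Quotient.field m
  exact ⟨A ⧸ m, _, _, finite_of_finite_type_of_isJacobsonRing k (A ⧸ m),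
    ⟨Ideal.Quotient.mkₐ k m⟩⟩

open TensorProduct in
theorem exists_ringHom_finiteDimensional_rat (S : Type u) [CommRing S] [IsDomain S]
    [CharZero S] [Algebra.FiniteType ℤ S] :
    ∃ (L : Type u) (_ : Field L) (_ : Algebra ℚ L),
      FiniteDimensional ℚ L ∧ Nonempty (S →+* L) := by
  have := Algebra.TensorProduct.nontrivial_of_algebraMap_injective_of_isDomain ℤ ℚ S
    (RingHom.injective_int _) (RingHom.injective_int _)
  obtain ⟨L, _, _, hL, ⟨f⟩⟩ := Algebra.FiniteType.exists_algHom_finiteDimensional ℚ (ℚ ⊗[ℤ] S)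
  exact ⟨L, _, _, hL, ⟨f.toRingHom.comp Algebra.TensorProduct.includeRight.toRingHom⟩⟩

theorem nonempty_algHom_adjoin_of_aeval_minpoly_eq_zero {R A T : Type*} [CommRing R]
    [IsDomain R] [IsIntegrallyClosed R] [CommRing A] [IsDomain A] [Algebra R A]
    [Module.IsTorsionFree R A] [CommRing T] [Algebra R T] {θ : A} (hθ : IsIntegral R θ)
    {t : T} (ht : aeval t (minpoly R θ) = 0) : Nonempty (Algebra.adjoin R {θ} →ₐ[R] T) :=
  ⟨(AdjoinRoot.liftAlgHom _ (Algebra.ofId R T) t ht).comp (minpoly.equivAdjoin hθ).symm.toAlgHom⟩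

/-- `φ` factors through the localization `O[1/M]`, embedded in `K`, to which `ψ` extends. -/
theorem nonempty_ringHom_of_smul_mem {S K F : Type*} [CommRing S] [Field K] [CommRing F]
    {s : Set S} (hs : Algebra.adjoin ℤ s = ⊤) (O : Subalgebra ℤ K) (ψ : O →+* F) {M : ℤ}
    (hMK : (M : K) ≠ 0) (hMF : IsUnit (M : F)) (φ : S →+* K) (hφ : ∀ x ∈ s, M • φ x ∈ O) :
    Nonempty (S →+* F) := by
  set u : O := (M : O)
  have hu : u ≠ 0 := fun h ↦ hMK (by simpa [u] using congrArg O.val h)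
  have hunitK : ∀ y : Submonoid.powers u, IsUnit (O.val.toRingHom y) := by
    rintro ⟨_, n, rfl⟩
    simpa [u] using (IsUnit.mk0 _ hMK).pow n
  have hunitF : ∀ y : Submonoid.powers u, IsUnit (ψ y) := by
    rintro ⟨_, n, rfl⟩
    simpa [u] using hMF.pow n
  let ι : Localization.Away u →+* K := IsLocalization.lift hunitK
  have hι : Function.Injective ι := (IsLocalization.lift_injective_iff _).mpr fun a b ↦
    ⟨fun h ↦ congrArg _ (IsLocalization.injective _
      (powers_le_nonZeroDivisors_of_noZeroDivisors hu) h),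
      fun h ↦ congrArg _ (Subtype.val_injective h)⟩
  have hgen : Subring.closure s ≤ ι.range.comap φ := Subring.closure_le.mpr fun x hx ↦
    ⟨IsLocalization.mk' _ (⟨M • φ x, hφ x hx⟩ : O) ⟨u, Submonoid.mem_powers u⟩,
      (IsLocalization.lift_mk'_spec _ _ _ _).mpr (by simp [u, zsmul_eq_mul])⟩
  have hrange : ∀ x, φ x ∈ ι.range := by
    rw [Algebra.adjoin_int] at hs
    exact fun x ↦ hgen (hs ▸ Algebra.mem_top (x := x) :)
  let e := RingEquiv.ofBijective ι.rangeRestrict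
    ⟨fun a b h ↦ hι (congrArg Subtype.val h), ι.rangeRestrict_surjective⟩
  exact ⟨(IsLocalization.lift hunitF).comp (e.symm.toRingHom.comp (φ.codRestrict _ hrange))⟩

theorem exists_inf_many_primes_hom_to_Fp
    (S : Type*) [CommRing S] [IsDomain S] [Algebra.FiniteType ℤ S] [CharZero S] :
    ∀ N : ℕ, ∃ p : ℕ, N < p ∧ p.Prime ∧ Nonempty (S →+* ZMod p) := by
  classical
  intro N
  obtain ⟨s, hs⟩ := Algebra.FiniteType.out (R := ℤ) (A := S)
  obtain ⟨L, _, _, _, ⟨φ⟩⟩ := exists_ringHom_finiteDimensional_rat S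
  have := charZero_of_injective_algebraMap (algebraMap ℚ L).injective
  obtain ⟨θ, hθ, hθL⟩ := exists_isIntegral_adjoin_eq_top ℤ ℚ (L := L)
  obtain ⟨M, hM, hMs⟩ := exists_smul_mem_adjoin_of_adjoin_eq_top ℤ ℚ hθL (s.image φ)
  obtain ⟨p, hNp, hp, a, hpa⟩ :=
    (minpoly ℤ θ).exists_prime_gt_dvd_eval (minpoly.natDegree_pos hθ) (max N M.natAbs)
  have := Fact.mk hp
  obtain ⟨ψ⟩ := nonempty_algHom_adjoin_of_aeval_minpoly_eq_zero hθ (t := (a : ZMod p)) <| by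
    simpa [aeval_def, eval₂_at_intCast, ZMod.intCast_zmod_eq_zero_iff_dvd] using hpa
  have hMp : IsUnit (M : ZMod p) := by
    refine isUnit_iff_ne_zero.mpr fun h ↦ ?_
    have := Nat.le_of_dvd (Int.natAbs_pos.mpr hM)
      (Int.ofNat_dvd_left.mp ((ZMod.intCast_zmod_eq_zero_iff_dvd M p).mp h))
    omega
  exact ⟨p, by omega, hp, nonempty_ringHom_of_smul_mem hs _ ψ.toRingHom
    (by exact_mod_cast hM) hMp φ fun x hx ↦ hMs _ (Finset.mem_image_of_mem φ hx)⟩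
end

section
/- Let k be a field of characteristic p > 0, let t̄₁,…,t̄ₙ ∈ k, let v̄(h) = ∏ᵢ₌₁ⁿ (h − t̄ᵢ), and let A(v̄) be the generalized Weyl algebra over k generated by x, y, h with relations xy = v̄(h), yx = v̄(h−1), hx = x(h+1), hy = y(h−1). Then the elements xᵖ, yᵖ, and hᵖ − h are central in A(v̄), and they satisfy the relation xᵖ yᵖ = ∏ᵢ₌₁ⁿ ((hᵖ − h) − (t̄ᵢᵖ − t̄ᵢ)). -/
open FreeAlgebra Polynomial

/-- The defining relations of the generalized Weyl algebra `A(v̄)` for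
`v̄(h) = ∏ i, (h - t̄ i)`: generators `x = ι 0`, `y = ι 1`, `h = ι 2` with
`x y = v̄(h)`, `y x = v̄(h-1)`, `h x = x (h+1)`, `h y = y (h-1)`. -/
inductive GWARel (K : Type) [CommRing K] {n : ℕ} (t : Fin n → K) :
    FreeAlgebra K (Fin 3) → FreeAlgebra K (Fin 3) → Prop
  | xy : GWARel K t (ι K 0 * ι K 1) (aeval (ι K 2) (∏ i, (X - C (t i))))
  | yx : GWARel K t (ι K 1 * ι K 0) (aeval (ι K 2 - 1) (∏ i, (X - C (t i))))
  | hx : GWARel K t (ι K 2 * ι K 0) (ι K 0 * (ι K 2 + 1))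
  | hy : GWARel K t (ι K 2 * ι K 1) (ι K 1 * (ι K 2 - 1))

/-- The generalized Weyl algebra `A(v̄)`, `v̄(h) = ∏ i, (h - t̄ i)`. -/
abbrev GWA (K : Type) [CommRing K] {n : ℕ} (t : Fin n → K) := RingQuot (GWARel K t)

/-- The generator `x` of the generalized Weyl algebra. -/
noncomputable def GWAx (K : Type) [CommRing K] {n : ℕ} (t : Fin n → K) : GWA K t :=
  RingQuot.mkRingHom (GWARel K t) (ι K 0)

/-- The generator `y` of the generalized Weyl algebra. -/
noncomputable def GWAy (K : Type) [CommRing K] {n : ℕ} (t : Fin n → K) : GWA K t :=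
  RingQuot.mkRingHom (GWARel K t) (ι K 1)

/-- The generator `h` of the generalized Weyl algebra. -/
noncomputable def GWAh (K : Type) [CommRing K] {n : ℕ} (t : Fin n → K) : GWA K t :=
  RingQuot.mkRingHom (GWARel K t) (ι K 2)

/-! In any algebra, elements `x, y, h` satisfying the defining relations obey
`f(h) xᵐ = xᵐ f(h + m)` and `xᵐ⁺¹ y - y xᵐ⁺¹ = xᵐ (v̄(h + m) - v̄(h - 1))`. Once `p = 0` in the algebra, taking
`m + 1 = p` makes both `h` and `y` commute with `xᵖ`, and `(h + 1)ᵖ - (h + 1) = hᵖ - h` lets `x`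
commute with `hᵖ - h`. The relations are preserved by passing to the opposite algebra and swapping
`x` and `y`, which gives the statements about `yᵖ`. Finally `xᵖ yᵖ = ∏_{j<p} v̄(h - j)`, and
`∏_{j<p} (X - j) = Xᵖ - X` turns the `p` shifts of each factor `h - t̄ᵢ` into
`(hᵖ - h) - (t̄ᵢᵖ - t̄ᵢ)`. Centrality follows because `x, y, h` generate the algebra. -/

theorem SemiconjBy.aeval {R A : Type*} [CommSemiring R] [Semiring A] [Algebra R A] {c a b : A}
    (h : SemiconjBy c a b) (f : R[X]) : SemiconjBy c (aeval a f) (aeval b f) := by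
  induction f using Polynomial.induction_on' with
  | add f g hf hg => simpa only [map_add] using hf.add_right hg
  | monomial n r =>
    simpa only [aeval_monomial] using
      SemiconjBy.mul_right (Algebra.commute_algebraMap_right r c) (h.pow_right n)

theorem SemiconjBy.pow_left_add_nsmul {A : Type*} [Semiring A] {a b c : A}
    (h : SemiconjBy a (b + c) b) (hc : Commute a c) (m : ℕ) :
    SemiconjBy (a ^ m) (b + m • c) b := by
  induction m with
  | zero => simp
  | succ m ih =>
    have ha : SemiconjBy a (b + (m + 1) • c) (b + m • c) := by
      rw [succ_nsmul', ← add_assoc]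
      exact h.add_right (hc.smul_right m)
    rw [pow_succ]
    exact ih.mul_left ha

structure IsGWATriple {R A : Type*} [CommRing R] [Ring A] [Algebra R A]
    (v : R[X]) (x y h : A) : Prop where
  h_mul_x : h * x = x * (h + 1)
  h_mul_y : h * y = y * (h - 1)
  x_mul_y : x * y = aeval h v
  y_mul_x : y * x = aeval (h - 1) v

namespace IsGWATriple

open MulOpposite

variable {R A : Type*} [CommRing R] [Ring A] [Algebra R A] {v : R[X]} {x y h : A}

theorem op (H : IsGWATriple v x y h) : IsGWATriple v (op y) (op x) (op h) where
  h_mul_x := by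
    simpa using congrArg MulOpposite.op
      (show y * h = (h + 1) * y by rw [add_mul, one_mul, H.h_mul_y]; noncomm_ring)
  h_mul_y := by
    simpa using congrArg MulOpposite.op
      (show x * h = (h - 1) * x by rw [sub_mul, one_mul, H.h_mul_x]; noncomm_ring)
  x_mul_y := by rw [← op_mul, H.x_mul_y, aeval_op_apply]
  y_mul_x := by rw [← op_mul, H.y_mul_x, ← aeval_op_apply, op_sub, op_one]

theorem semiconjBy_x_pow (H : IsGWATriple v x y h) {c : A} (hc : Commute x c) (m : ℕ) :
    SemiconjBy (x ^ m) (h + c + m) (h + c) := by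
  have hx : SemiconjBy x (h + c + 1) (h + c) := by
    simpa only [add_right_comm] using SemiconjBy.add_right H.h_mul_x.symm hc
  simpa using hx.pow_left_add_nsmul (Commute.one_right x) m

theorem semiconjBy_y_pow (H : IsGWATriple v x y h) (m : ℕ) : SemiconjBy (y ^ m) (h - m) h := by
  simpa [← sub_eq_add_neg] using
    SemiconjBy.pow_left_add_nsmul (c := -1) (by rw [← sub_eq_add_neg]; exact H.h_mul_y.symm)
      (Commute.neg_one_right y) m

theorem x_pow_succ_mul_y (H : IsGWATriple v x y h) (m : ℕ) :
    x ^ (m + 1) * y = y * x ^ (m + 1) + x ^ m * (aeval (h + m) v - aeval (h - 1) v) := by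
  induction m with
  | zero => simp [H.x_mul_y, H.y_mul_x]
  | succ m ih =>
    have h₀ := (H.semiconjBy_x_pow (Commute.zero_right x) (m + 1)).aeval v
    have h₁ := (H.semiconjBy_x_pow (Commute.neg_one_right x) (m + 1)).aeval v
    rw [add_zero] at h₀
    rw [show h + -1 + ((m + 1 : ℕ) : A) = h + m by push_cast; abel, ← sub_eq_add_neg] at h₁
    have hxy : x * y = y * x + (aeval h v - aeval (h - 1) v) := by
      rw [H.x_mul_y, H.y_mul_x]; abel
    calc x ^ (m + 1 + 1) * y
        = x * y * x ^ (m + 1) + x ^ (m + 1) * (aeval (h + m) v - aeval (h - 1) v) := by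
          rw [pow_succ' x (m + 1), mul_assoc, ih, pow_succ']; noncomm_ring
      _ = y * x ^ (m + 1 + 1) + x ^ (m + 1) * (aeval (h + (m + 1 : ℕ)) v - aeval (h - 1) v) := by
          rw [hxy, add_mul, sub_mul, ← h₀, ← h₁, pow_succ' x (m + 1)]
          noncomm_ring

theorem x_pow_mul_y_pow (H : IsGWATriple v x y h) (m : ℕ) :
    x ^ m * y ^ m = aeval h (∏ j ∈ Finset.range m, v.comp (X - C (j : R))) := by
  induction m with
  | zero => simp
  | succ m ih =>
    have hy := (H.semiconjBy_y_pow m).aeval v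
    calc x ^ (m + 1) * y ^ (m + 1) = x ^ m * (x * y) * y ^ m := by
          rw [pow_succ, pow_succ']; noncomm_ring
      _ = x ^ m * y ^ m * aeval (h - m) v := by rw [H.x_mul_y, mul_assoc, ← hy, mul_assoc]
      _ = _ := by rw [ih, Finset.prod_range_succ, map_mul, aeval_comp]; simp

variable {p : ℕ}

theorem commute_x_pow_h (H : IsGWATriple v x y h) (hp : (p : A) = 0) : Commute (x ^ p) h := by
  have hx := H.semiconjBy_x_pow (Commute.zero_right x) p
  rwa [add_zero, hp, add_zero] at hx

theorem commute_x_pow_y (H : IsGWATriple v x y h) (hp : (p : A) = 0) : Commute (x ^ p) y := by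
  cases p with
  | zero => simp
  | succ m =>
    have hm : h + (m : A) = h - 1 := by
      rw [← sub_eq_zero, ← hp]; push_cast; abel
    show x ^ (m + 1) * y = y * x ^ (m + 1)
    simpa [hm] using H.x_pow_succ_mul_y m

theorem commute_h_pow_sub_h_x [Fact p.Prime] [CharP R p] (H : IsGWATriple v x y h) :
    Commute (h ^ p - h) x := by
  have hx := SemiconjBy.aeval (c := x) H.h_mul_x.symm (X ^ p - X : R[X])
  have hshift : aeval (h + 1) (X ^ p - X : R[X]) = aeval h (X ^ p - X : R[X]) := by
    rw [show h + 1 = aeval h (X + 1 : R[X]) by simp, ← aeval_comp]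
    simp [add_pow_char]
  show (h ^ p - h) * x = x * (h ^ p - h)
  simpa [hshift] using hx.symm

theorem commute_y_pow_h (H : IsGWATriple v x y h) (hp : (p : A) = 0) : Commute (y ^ p) h := by
  simpa [← op_pow] using (H.op.commute_x_pow_h (by rw [← op_natCast, hp, op_zero])).unop

theorem commute_x_y_pow (H : IsGWATriple v x y h) (hp : (p : A) = 0) : Commute x (y ^ p) := by
  simpa [← op_pow] using (H.op.commute_x_pow_y (by rw [← op_natCast, hp, op_zero])).unop.symm

theorem commute_h_pow_sub_h_y [Fact p.Prime] [CharP R p] (H : IsGWATriple v x y h) :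
    Commute (h ^ p - h) y := by
  simpa [← op_pow] using H.op.commute_h_pow_sub_h_x.unop

end IsGWATriple

section CharP

variable {K : Type*} [Field K] (p : ℕ) [Fact p.Prime] [CharP K p]

theorem prod_range_X_sub_natCast : ∏ j ∈ Finset.range p, (X - C (j : K)) = X ^ p - X := by
  have hp : 1 < p := (Fact.out : p.Prime).one_lt
  symm
  refine eq_of_monic_of_dvd_of_natDegree_le (monic_prod_of_monic _ _ fun j _ => monic_X_sub_C _)
    (monic_X_pow_sub (by rw [degree_X]; exact_mod_cast hp)) ?_ ?_
  · refine Finset.prod_dvd_of_coprime (fun i hi j hj hij => ?_) fun j _ => dvd_iff_isRoot.2 ?_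
    · refine isCoprime_X_sub_C_of_isUnit_sub (sub_ne_zero_of_ne fun h => hij ?_).isUnit
      exact CharP.natCast_injOn_Iio K p (Finset.mem_range.1 hi) (Finset.mem_range.1 hj) h
    · rw [IsRoot, eval_sub, eval_pow, eval_X, ← frobenius_def, map_natCast, sub_self]
  · rw [natDegree_finsetProd_X_sub_C_eq_card, Finset.card_range,
      FiniteField.X_pow_card_sub_X_natDegree_eq K hp]

theorem prod_range_X_sub_C_sub_natCast (a : K) :
    ∏ j ∈ Finset.range p, (X - C a - C (j : K)) = X ^ p - X - C (a ^ p - a) := by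
  calc ∏ j ∈ Finset.range p, (X - C a - C (j : K))
      = aeval (X - C a) (∏ j ∈ Finset.range p, (X - C (j : K))) := by simp [map_prod]
    _ = X ^ p - X - C (a ^ p - a) := by
      rw [prod_range_X_sub_natCast, map_sub, map_pow, aeval_X, sub_pow_char, C_sub, C_pow]; ring

theorem prod_range_comp_X_sub_natCast {ι : Type*} (s : Finset ι) (t : ι → K) :
    ∏ j ∈ Finset.range p, (∏ i ∈ s, (X - C (t i))).comp (X - C (j : K)) =
      (∏ i ∈ s, (X - C (t i ^ p - t i))).comp (X ^ p - X) := by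
  simp only [prod_comp, sub_comp, X_comp, C_comp]
  rw [Finset.prod_comm]
  refine Finset.prod_congr rfl fun i _ => ?_
  rw [← prod_range_X_sub_C_sub_natCast]
  exact Finset.prod_congr rfl fun j _ => by ring

end CharP

namespace GWA

variable {K : Type} [CommRing K] {n : ℕ} (t : Fin n → K)

theorem mkRingHom_eq_mkAlgHom (a : FreeAlgebra K (Fin 3)) :
    RingQuot.mkRingHom (GWARel K t) a = RingQuot.mkAlgHom K (GWARel K t) a := by
  rw [← RingQuot.mkAlgHom_coe K]; rfl

theorem isGWATriple : IsGWATriple (∏ i, (X - C (t i))) (GWAx K t) (GWAy K t) (GWAh K t) := by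
  simp only [GWAx, GWAy, GWAh, mkRingHom_eq_mkAlgHom]
  constructor
  · simpa using RingQuot.mkAlgHom_rel K (GWARel.hx (t := t))
  · simpa using RingQuot.mkAlgHom_rel K (GWARel.hy (t := t))
  · simpa [aeval_algHom_apply] using RingQuot.mkAlgHom_rel K (GWARel.xy (t := t))
  · have h := RingQuot.mkAlgHom_rel K (GWARel.yx (t := t))
    rwa [map_mul, ← aeval_algHom_apply, map_sub, map_one] at h

theorem adjoin_generators : Algebra.adjoin K {GWAx K t, GWAy K t, GWAh K t} = ⊤ := by
  have hrange : RingQuot.mkAlgHom K (GWARel K t) '' Set.range (ι K) =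
      {GWAx K t, GWAy K t, GWAh K t} := by
    ext z
    simp [GWAx, GWAy, GWAh, mkRingHom_eq_mkAlgHom, Fin.exists_fin_succ, eq_comm]
  rw [← hrange, ← AlgHom.map_adjoin, FreeAlgebra.adjoin_range_ι, Algebra.map_top,
    AlgHom.range_eq_top]
  exact RingQuot.mkAlgHom_surjective K _

variable {t} in
theorem commute_of_commute_generators {z : GWA K t} (hx : Commute z (GWAx K t))
    (hy : Commute z (GWAy K t)) (hh : Commute z (GWAh K t)) (a : GWA K t) : Commute z a := by
  have hle : Algebra.adjoin K {GWAx K t, GWAy K t, GWAh K t} ≤ Subalgebra.centralizer K {z} := by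
    rw [Algebra.adjoin_le_iff]
    rintro _ (rfl | rfl | rfl) <;> rintro _ rfl
    exacts [hx, hy, hh]
  exact (Subalgebra.mem_centralizer_iff K).1 (hle (adjoin_generators t ▸ Algebra.mem_top)) z rfl

end GWA

theorem GWA_center_char_p
    (k : Type) [Field k] (p : ℕ) (hp : 0 < p) [CharP k p]
    (n : ℕ) (t : Fin n → k) :
    (∀ a : GWA k t, GWAx k t ^ p * a = a * GWAx k t ^ p) ∧
    (∀ a : GWA k t, GWAy k t ^ p * a = a * GWAy k t ^ p) ∧
    (∀ a : GWA k t, (GWAh k t ^ p - GWAh k t) * a = a * (GWAh k t ^ p - GWAh k t)) ∧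
    GWAx k t ^ p * GWAy k t ^ p =
      aeval (GWAh k t ^ p - GWAh k t) (∏ i, (X - C (t i ^ p - t i))) := by
  have : NeZero p := ⟨hp.ne'⟩
  have : Fact p.Prime := CharP.char_is_prime_of_pos k p
  have H := GWA.isGWATriple t
  have hpA : (p : GWA k t) = 0 := by
    rw [← map_natCast (algebraMap k (GWA k t)), CharP.cast_eq_zero, map_zero]
  refine ⟨GWA.commute_of_commute_generators ((Commute.refl _).pow_left p)
      (H.commute_x_pow_y hpA) (H.commute_x_pow_h hpA),
    GWA.commute_of_commute_generators (H.commute_x_y_pow hpA).symm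
      ((Commute.refl _).pow_left p) (H.commute_y_pow_h hpA),
    GWA.commute_of_commute_generators H.commute_h_pow_sub_h_x H.commute_h_pow_sub_h_y
      (((Commute.refl _).pow_left p).sub_left (Commute.refl _)), ?_⟩
  rw [H.x_pow_mul_y_pow, prod_range_comp_X_sub_natCast, aeval_comp]
  simp
end

section
/- Let S be a commutative integral domain of characteristic zero that is finitely generated as a ℤ-algebra. Then there exist a positive integer l, a natural number n, and elements x₁,…,xₙ of the localization S[1/l] that are algebraically independent over ℚ, such that S[1/l] is integral over the ℤ[1/l]-subalgebra ℤ[1/l][x₁,…,xₙ] generated by x₁,…,xₙ. Equivalently, there is an injective ℤ[1/l]-algebra homomorphism from the polynomial ring ℤ[1/l][X₁,…,Xₙ] to S[1/l] such that S[1/l] is integral over its image. -/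
/-!
Noether normalization over `ℚ`, applied to the `ℚ`-algebra generated by `S` inside a fraction
field `K`, gives algebraically independent `x₁, …, xₙ` over which `S` is integral. Each `xᵢ` is a
`ℚ`-polynomial in the generators of `S`, and each generator satisfies a monic equation whose
coefficients are `ℚ`-polynomials in the `xᵢ`. Only finitely many denominators occur, so after
inverting their product `l` all of this happens over `ℤ[1/l]`, inside the image of the embedding
`S[1/l] ↪ K`.
-/

open Polynomial Algebra

section Integral

variable {R A B : Type*} [CommRing R] [CommRing A] [CommRing B] [Algebra R A] [Algebra R B]

theorem IsIntegral.of_le {W W' : Subalgebra R A} (hle : W ≤ W') {a : A} (h : IsIntegral W a) :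
    IsIntegral W' a := by
  obtain ⟨p, hpm, hp⟩ := h
  exact ⟨p.map (Subalgebra.inclusion hle), hpm.map _, by rw [eval₂_map]; exact hp⟩

theorem IsIntegral.of_monic_of_coeffs_subset {W : Subalgebra R A} {p : A[X]} (hpm : p.Monic)
    {a : A} (hp : p.IsRoot a) (hcoeffs : (p.coeffs : Set A) ⊆ W) : IsIntegral W a := by
  have hlifts : p ∈ lifts (algebraMap W A) :=
    (lifts_iff_coeffs_subset_range p).2 (by simpa using hcoeffs)
  obtain ⟨q, rfl, -, hqm⟩ := lifts_and_natDegree_eq_and_monic hlifts hpm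
  exact ⟨q, hqm, by rwa [← eval_map]⟩

theorem IsIntegral.of_map_of_injective {f : A →ₐ[R] B} (hf : Function.Injective f)
    {C : Subalgebra R A} {a : A} (h : IsIntegral (C.map f) (f a)) : IsIntegral C a := by
  obtain ⟨p, hpm, hp⟩ := h
  let e := C.equivMapOfInjective f hf
  have he : ((f : A →+* B).comp (algebraMap C A)).comp (e.symm : C.map f →+* C) =
      algebraMap (C.map f) B := by
    ext y
    exact congrArg Subtype.val (e.apply_symm_apply y)
  refine ⟨p.map (e.symm : C.map f →+* C), hpm.map _, hf ?_⟩
  rw [map_zero, ← AlgHom.coe_toRingHom, hom_eval₂, eval₂_map, he]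
  exact hp

theorem AlgHom.isIntegral_range_of_isIntegralElem (φ : B →ₐ[R] A) {a : A}
    (h : (φ : B →+* A).IsIntegralElem a) : IsIntegral φ.range a := by
  obtain ⟨p, hpm, hp⟩ := h
  exact ⟨p.map (φ.rangeRestrict : B →+* φ.range), hpm.map _, by rw [eval₂_map]; exact hp⟩

theorem AlgHom.isIntegral_apply_of_adjoin_eq_top (f : A →ₐ[R] B) {W : Subalgebra R B}
    {s : Set A} (hs : adjoin R s = ⊤) (h : ∀ a ∈ s, IsIntegral W (f a)) (a : A) :
    IsIntegral W (f a) := by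
  have hle : adjoin R s ≤ ((integralClosure W B).restrictScalars R).comap f := adjoin_le h
  exact hle (hs ▸ Algebra.mem_top)

end Integral

theorem Subalgebra.exists_algebraicIndependent_isIntegral {k A : Type*} [Field k] [CommRing A]
    [Algebra k A] (T : Subalgebra k A) [Nontrivial T] [Algebra.FiniteType k T] :
    ∃ (n : ℕ) (x : Fin n → A), AlgebraicIndependent k x ∧ (∀ i, x i ∈ T) ∧
      ∀ a ∈ T, IsIntegral (adjoin k (Set.range x)) a := by
  obtain ⟨n, g, hinj, hint⟩ := exists_integral_inj_algHom_of_fg k T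
  set φ := T.val.comp g
  have hφ : φ = MvPolynomial.aeval (φ ∘ MvPolynomial.X) := MvPolynomial.aeval_unique φ
  refine ⟨n, φ ∘ MvPolynomial.X, ?_, fun i => (g _).2, fun a ha => ?_⟩
  · rw [algebraicIndependent_iff_injective_aeval, ← hφ]
    exact Subtype.val_injective.comp hinj
  · rw [← MvPolynomial.aeval_range, ← hφ]
    exact φ.isIntegral_range_of_isIntegralElem ((hint ⟨a, ha⟩).map T.val.toRingHom)

theorem Nat.exists_pos_forall_of_dvd_mono {ι : Type*} [Finite ι] {P : ι → ℕ → Prop}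
    (hmono : ∀ i l m, l ∣ m → 0 < m → P i l → P i m) (h : ∀ i, ∃ l, 0 < l ∧ P i l) :
    ∃ l, 0 < l ∧ ∀ i, P i l := by
  cases nonempty_fintype ι
  choose f hf0 hf using h
  have hpos : 0 < ∏ i, f i := Finset.prod_pos fun i _ => hf0 i
  exact ⟨∏ i, f i, hpos, fun i => hmono i _ _ (Finset.dvd_prod_of_mem f (Finset.mem_univ i))
    hpos (hf i)⟩

section CharZero

variable {K : Type*} [Field K] [CharZero K]

theorem adjoin_union_inv_natCast_mono (s : Set K) {l m : ℕ} (hlm : l ∣ m) (hm : 0 < m) :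
    adjoin ℤ (s ∪ {(l : K)⁻¹}) ≤ adjoin ℤ (s ∪ {(m : K)⁻¹}) := by
  refine adjoin_le (Set.union_subset (subset_adjoin.trans' Set.subset_union_left) ?_)
  obtain ⟨c, rfl⟩ := hlm
  have hc : (c : K) ≠ 0 := by exact_mod_cast (Nat.pos_of_mul_pos_left hm).ne'
  have hinv : (l : K)⁻¹ = c * ((l * c : ℕ) : K)⁻¹ := by
    push_cast
    field_simp
  rw [Set.singleton_subset_iff, SetLike.mem_coe, hinv]
  exact mul_mem (Subalgebra.natCast_mem _ c) (subset_adjoin (Or.inr rfl))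

theorem exists_mem_adjoin_union_inv_natCast {s : Set K} {v : K} (hv : v ∈ adjoin ℚ s) :
    ∃ l : ℕ, 0 < l ∧ v ∈ adjoin ℤ (s ∪ {(l : K)⁻¹}) := by
  induction hv using adjoin_induction with
  | mem v hv => exact ⟨1, one_pos, subset_adjoin (Or.inl hv)⟩
  | algebraMap q =>
    refine ⟨q.den, q.pos, ?_⟩
    rw [eq_ratCast, Rat.cast_def, div_eq_mul_inv]
    exact mul_mem (Subalgebra.intCast_mem _ _) (subset_adjoin (Or.inr rfl))
  | add v w _ _ hv hw =>
    obtain ⟨l, hl, hv⟩ := hv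
    obtain ⟨m, hm, hw⟩ := hw
    exact ⟨l * m, Nat.mul_pos hl hm, add_mem
      (adjoin_union_inv_natCast_mono s (dvd_mul_right l m) (Nat.mul_pos hl hm) hv)
      (adjoin_union_inv_natCast_mono s (dvd_mul_left m l) (Nat.mul_pos hl hm) hw)⟩
  | mul v w _ _ hv hw =>
    obtain ⟨l, hl, hv⟩ := hv
    obtain ⟨m, hm, hw⟩ := hw
    exact ⟨l * m, Nat.mul_pos hl hm, mul_mem
      (adjoin_union_inv_natCast_mono s (dvd_mul_right l m) (Nat.mul_pos hl hm) hv)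
      (adjoin_union_inv_natCast_mono s (dvd_mul_left m l) (Nat.mul_pos hl hm) hw)⟩

theorem exists_isIntegral_adjoin_union_inv_natCast {s : Set K} {a : K}
    (ha : IsIntegral (adjoin ℚ s) a) :
    ∃ l : ℕ, 0 < l ∧ IsIntegral (adjoin ℤ (s ∪ {(l : K)⁻¹})) a := by
  obtain ⟨p, hpm, hp⟩ := ha
  set q := p.map (algebraMap (adjoin ℚ s) K)
  have hq : ∀ c : q.coeffs,
      ∃ l : ℕ, 0 < l ∧ (c : K) ∈ adjoin ℤ (s ∪ {(l : K)⁻¹}) := by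
    rintro ⟨c, hc⟩
    obtain ⟨i, -, rfl⟩ := mem_coeffs_iff.1 hc
    exact exists_mem_adjoin_union_inv_natCast (by simp [q])
  obtain ⟨l, hl, hcoeffs⟩ := Nat.exists_pos_forall_of_dvd_mono
    (P := fun (c : q.coeffs) l => (c : K) ∈ adjoin ℤ (s ∪ {(l : K)⁻¹}))
    (fun _ l m hlm hm h => adjoin_union_inv_natCast_mono s hlm hm h) hq
  have hroot : q.IsRoot a := by rwa [IsRoot, eval_map]
  exact ⟨l, hl, .of_monic_of_coeffs_subset (hpm.map _) hroot fun c hc => hcoeffs ⟨c, hc⟩⟩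

theorem exists_adjoin_int_union_inv_natCast {G : Set K} (hG : G.Finite) {n : ℕ}
    {x : Fin n → K} (hx : ∀ i, x i ∈ adjoin ℚ G)
    (hint : ∀ g ∈ G, IsIntegral (adjoin ℚ (Set.range x)) g) :
    ∃ l : ℕ, 0 < l ∧ (∀ i, x i ∈ adjoin ℤ (G ∪ {(l : K)⁻¹})) ∧
      ∀ g ∈ G, IsIntegral (adjoin ℤ (Set.range x ∪ {(l : K)⁻¹})) g := by
  have := hG.to_subtype
  obtain ⟨l, hl, h⟩ := Nat.exists_pos_forall_of_dvd_mono
    (P := Sum.elim (fun i l => x i ∈ adjoin ℤ (G ∪ {(l : K)⁻¹}))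
      (fun (g : G) l => IsIntegral (adjoin ℤ (Set.range x ∪ {(l : K)⁻¹})) (g : K)))
    (by
      rintro (i | g) l m hlm hm h
      · exact adjoin_union_inv_natCast_mono G hlm hm h
      · exact h.of_le (adjoin_union_inv_natCast_mono _ hlm hm))
    (by
      rintro (i | ⟨g, hg⟩)
      · exact exists_mem_adjoin_union_inv_natCast (hx i)
      · exact exists_isIntegral_adjoin_union_inv_natCast (hint g hg))
  exact ⟨l, hl, fun i => h (.inl i), fun g hg => h (.inr ⟨g, hg⟩)⟩

end CharZero

namespace IsFractionRing

variable {S K : Type*} [CommRing S] [Field K] [Algebra S K] [IsFractionRing S K] {l : S}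

theorem isUnit_algebraMap_of_ne_zero (hl : l ≠ 0) : IsUnit (algebraMap S K l) :=
  isUnit_iff_ne_zero.2 ((map_ne_zero_iff _ (IsFractionRing.injective S K)).2 hl)

variable (K) in
noncomputable def liftAway (hl : l ≠ 0) : Localization.Away l →ₐ[ℤ] K :=
  { IsLocalization.Away.lift l (isUnit_algebraMap_of_ne_zero hl) with
    commutes' := fun n => by simp }

section

variable (hl : l ≠ 0)
include hl

theorem liftAway_algebraMap (s : S) : liftAway K hl (algebraMap S _ s) = algebraMap S K s :=
  IsLocalization.Away.lift_eq l (isUnit_algebraMap_of_ne_zero hl) s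

theorem liftAway_invSelf :
    liftAway K hl (IsLocalization.Away.invSelf l) = (algebraMap S K l)⁻¹ := by
  refine eq_inv_of_mul_eq_one_right ?_
  rw [← liftAway_algebraMap hl, ← map_mul, IsLocalization.Away.mul_invSelf, map_one]

theorem liftAway_injective [IsDomain S] : Function.Injective (liftAway K hl) := by
  have hM : Submonoid.powers l ≤ nonZeroDivisors S :=
    powers_le_nonZeroDivisors_of_noZeroDivisors hl
  change Function.Injective (IsLocalization.Away.lift l (isUnit_algebraMap_of_ne_zero (K := K) hl))
  rw [IsLocalization.Away.lift, IsLocalization.lift_injective_iff]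
  intro a b
  rw [(IsLocalization.injective _ hM).eq_iff, (IsFractionRing.injective S K).eq_iff]

theorem range_liftAway :
    (liftAway K hl).range =
      adjoin ℤ (Set.range (algebraMap S K) ∪ {(algebraMap S K l)⁻¹}) := by
  set T := adjoin ℤ (Set.range (algebraMap S K) ∪ {(algebraMap S K l)⁻¹})
  have hinv : (algebraMap S K l)⁻¹ ∈ T := subset_adjoin (Set.mem_union_right _ rfl)
  refine le_antisymm ?_ (adjoin_le (Set.union_subset ?_ ?_))
  · intro v hv
    obtain ⟨z, rfl⟩ := (AlgHom.mem_range _).1 hv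
    obtain ⟨n, a, hz⟩ := IsLocalization.Away.surj l z
    have hz' : z = algebraMap S _ a * IsLocalization.Away.invSelf l ^ n := by
      rw [← hz, mul_assoc, ← mul_pow, IsLocalization.Away.mul_invSelf, one_pow, mul_one]
    rw [hz', map_mul (liftAway K hl), map_pow, liftAway_algebraMap, liftAway_invSelf]
    have ha : algebraMap S K a ∈ T := subset_adjoin (Set.mem_union_left _ ⟨a, rfl⟩)
    exact mul_mem ha (pow_mem hinv n)
  · rintro _ ⟨s, rfl⟩
    exact ⟨_, liftAway_algebraMap hl s⟩
  · rw [Set.singleton_subset_iff]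
    exact ⟨_, liftAway_invSelf hl⟩

theorem exists_algebraicIndependent_isIntegral_away [IsDomain S] {ι : Type*} {x : ι → K}
    (hind : AlgebraicIndependent ℤ x)
    (hx : ∀ i, x i ∈ adjoin ℤ (Set.range (algebraMap S K) ∪ {(algebraMap S K l)⁻¹}))
    (hint : ∀ s,
      IsIntegral (adjoin ℤ (Set.range x ∪ {(algebraMap S K l)⁻¹})) (algebraMap S K s)) :
    ∃ y : ι → Localization.Away l, AlgebraicIndependent ℤ y ∧
      ∀ z : Localization.Away l,
        IsIntegral (adjoin ℤ (Set.range y ∪ {IsLocalization.Away.invSelf l})) z := by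
  rw [← range_liftAway hl] at hx
  choose y hy using hx
  have hxy : liftAway K hl ∘ y = x := funext hy
  refine ⟨y, .of_comp (liftAway K hl) (hxy ▸ hind), fun z => ?_⟩
  refine IsIntegral.of_map_of_injective (liftAway_injective (K := K) hl) (a := z) ?_
  rw [AlgHom.map_adjoin, Set.image_union, ← Set.range_comp, hxy, Set.image_singleton,
    liftAway_invSelf]
  set W := adjoin ℤ (Set.range x ∪ {(algebraMap S K l)⁻¹})
  have hle : (liftAway K hl).range ≤ (integralClosure W K).restrictScalars ℤ := by
    rw [range_liftAway]
    refine adjoin_le (Set.union_subset (Set.range_subset_iff.2 hint) ?_)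
    rw [Set.singleton_subset_iff]
    exact isIntegral_algebraMap (x := (⟨_, subset_adjoin (Or.inr rfl)⟩ : W))
  exact hle ⟨z, rfl⟩

end

end IsFractionRing

theorem IsFractionRing.exists_noether_normalization_away (S K : Type*) [CommRing S] [IsDomain S]
    [Algebra.FiniteType ℤ S] [CharZero S] [Field K] [Algebra S K] [IsFractionRing S K] :
    ∃ l : ℕ, 0 < l ∧ ∃ (n : ℕ) (x : Fin n → Localization.Away (l : S)),
      AlgebraicIndependent ℤ x ∧ ∀ s : Localization.Away (l : S),
        IsIntegral (adjoin ℤ (Set.range x ∪ {IsLocalization.Away.invSelf (l : S)})) s := by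
  have := charZero_of_isFractionRing S (K := K)
  obtain ⟨gens, hgens⟩ := Algebra.FiniteType.out (R := ℤ) (A := S)
  set G := algebraMap S K '' gens
  have hG : G.Finite := gens.finite_toSet.image _
  have := Algebra.FiniteType.adjoin_of_finite (R := ℚ) hG
  obtain ⟨n, x, hind, hxT, hint⟩ := (adjoin ℚ G).exists_algebraicIndependent_isIntegral
  obtain ⟨l, hl, hxl, hintl⟩ :=
    exists_adjoin_int_union_inv_natCast hG hxT fun g hg => hint g (subset_adjoin hg)
  refine ⟨l, hl, n, exists_algebraicIndependent_isIntegral_away (Nat.cast_ne_zero.2 hl.ne')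
    (hind.restrictScalars Int.cast_injective) (fun i => ?_) fun s => ?_⟩
  · rw [map_natCast]
    exact adjoin_mono (Set.union_subset_union_left _ (Set.image_subset_range _ _)) (hxl i)
  · rw [map_natCast]
    exact (IsScalarTower.toAlgHom ℤ S K).isIntegral_apply_of_adjoin_eq_top hgens
      (fun g hg => hintl _ ⟨g, hg, rfl⟩) s

set_option synthInstance.maxHeartbeats 1000000
theorem noether_normalization_over_Z_inverted
    (S : Type*) [CommRing S] [IsDomain S] [Algebra.FiniteType ℤ S] [CharZero S] :
    ∃ l : ℕ, 0 < l ∧ ∃ (n : ℕ) (x : Fin n → Localization.Away ((l : S))),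
      AlgebraicIndependent ℤ x ∧
      ∀ s : Localization.Away ((l : S)),
        IsIntegral
          (Algebra.adjoin ℤ
            (Set.range x ∪ {IsLocalization.Away.invSelf ((l : S))})) s :=
  IsFractionRing.exists_noether_normalization_away S (FractionRing S)
end
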